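/- Let f: U → A and g: V → B be factor maps from G₁ to H₁ and G₂ to H₂, with costs satisfying c_ext(u,v) = c(f(u),g(v)). Then the optimal transition coupling costs agree: min over transition couplings of (X,Y) of E[c_ext(X̃₀,Ỹ₀)] equals min over transition couplings of (W,Z) of E[c(W̃₀,Z̃₀)]; moreover, for every optimal transition coupling (W̃,Z̃) of W and Z there is an optimal transition coupling (X̃,Ỹ) of X and Y with (f(X̃), g(Ỹ)) equal in distribution to (W̃,Z̃). -/

import Mathlib

/-!
Pushing a stationary transition coupling `(lam, R)` of `P, Q` forward along `f × g` gives a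
coupling of `pH, qH` with the same cost, and the kernel obtained by averaging the pushed rows of
`R` over each fibre (weighted by `lam`) is a transition coupling of `PH, QH` keeping it stationary.
Conversely, a transition coupling `(lamH, RH)` of `PH, QH` lifts row by row, by relatively
independent joinings over the factors, to a coupling kernel `R` of `P, Q` that lumps exactly onto
`RH`. This `R` maps the compact convex set of couplings of `p, q` lying over `lamH` into itself,
so by the Krylov–Bogolyubov argument it has a stationary law there. Lumpability makes its path
measures project onto those of `(lamH, RH)`. Both optimisation problems therefore have the same
set of costs, and optimal couplings lift to optimal couplings.
-/

/-- `(lam, R)` is a stationary transition coupling of the Markov kernels `P` and `Q`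
whose one-dimensional marginals are the stationary distributions `p` and `q`. -/
def IsTCStat {U V : Type*} [Fintype U] [Fintype V]
    (P : U → U → ℝ) (Q : V → V → ℝ) (p : U → ℝ) (q : V → ℝ)
    (lam : U × V → ℝ) (R : U × V → U × V → ℝ) : Prop :=
  (∀ a b, 0 ≤ R a b) ∧
  (∀ (a : U × V) (u' : U), ∑ v' : V, R a (u', v') = P a.1 u') ∧
  (∀ (a : U × V) (v' : V), ∑ u' : U, R a (u', v') = Q a.2 v') ∧
  (∀ a, 0 ≤ lam a) ∧ (∑ a : U × V, lam a = 1) ∧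
  (∀ b : U × V, ∑ a : U × V, lam a * R a b = lam b) ∧
  (∀ u, ∑ v, lam (u, v) = p u) ∧
  (∀ v, ∑ u, lam (u, v) = q v)

open Finset Matrix Filter Topology

section FiberSum

variable {ι κ : Type*} [Fintype ι] [DecidableEq κ]

def fiberSum (φ : ι → κ) (μ : ι → ℝ) (k : κ) : ℝ :=
  ∑ i with φ i = k, μ i

variable (φ : ι → κ)

theorem fiberSum_nonneg {μ : ι → ℝ} (hμ : ∀ i, 0 ≤ μ i) (k : κ) : 0 ≤ fiberSum φ μ k :=
  sum_nonneg fun i _ => hμ i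

theorem eq_zero_of_fiberSum_eq_zero {μ : ι → ℝ} (hμ : ∀ i, 0 ≤ μ i) {i : ι}
    (h : fiberSum φ μ (φ i) = 0) : μ i = 0 :=
  (sum_eq_zero_iff_of_nonneg fun j _ => hμ j).1 h i (by simp)

theorem sum_fiberSum_mul [Fintype κ] (μ : ι → ℝ) (T : κ → ℝ) :
    ∑ k, fiberSum φ μ k * T k = ∑ i, μ i * T (φ i) := by
  rw [← sum_fiberwise univ φ (fun i => μ i * T (φ i))]
  refine sum_congr rfl fun k _ => ?_
  rw [fiberSum, sum_mul]
  exact sum_congr rfl fun i hi => by rw [(mem_filter.1 hi).2]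

theorem sum_fiberSum [Fintype κ] (μ : ι → ℝ) : ∑ k, fiberSum φ μ k = ∑ i, μ i := by
  simpa using sum_fiberSum_mul φ μ 1

theorem sum_mul_div_fiberSum [Fintype κ] (μ : ι → ℝ) {T : κ → ℝ}
    (hT : ∀ k, fiberSum φ μ k = 0 → T k = 0) :
    ∑ i, μ i * (T (φ i) / fiberSum φ μ (φ i)) = ∑ k, T k := by
  rw [← sum_fiberSum_mul φ μ (fun k => T k / fiberSum φ μ k)]
  exact sum_congr rfl fun k _ => by rw [← mul_div_assoc, mul_div_cancel_left_of_imp (hT k)]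

theorem fiberSum_vecMul_apply (μ : ι → ℝ) (R : Matrix ι ι ℝ) (k : κ) :
    fiberSum φ (μ ᵥ* R) k = ∑ i, μ i * fiberSum φ (R i) k := by
  simp only [fiberSum, vecMul, dotProduct, mul_sum]
  exact sum_comm

theorem fiberSum_vecMul [Fintype κ] (μ : ι → ℝ) {R : Matrix ι ι ℝ} {RK : Matrix κ κ ℝ}
    (hR : ∀ i, fiberSum φ (R i) = RK (φ i)) :
    fiberSum φ (μ ᵥ* R) = fiberSum φ μ ᵥ* RK := by
  ext k
  rw [fiberSum_vecMul_apply, vecMul, dotProduct, sum_fiberSum_mul]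
  simp only [hR]

end FiberSum

section Coupling

variable {U V : Type*} [Fintype U] [Fintype V]

structure IsCoupling (μ : U → ℝ) (ν : V → ℝ) (γ : U × V → ℝ) : Prop where
  nonneg : ∀ z, 0 ≤ γ z
  sum_fst : ∀ u, ∑ v, γ (u, v) = μ u
  sum_snd : ∀ v, ∑ u, γ (u, v) = ν v

variable {μ : U → ℝ} {ν : V → ℝ} {γ : U × V → ℝ}

namespace IsCoupling

theorem le_fst (h : IsCoupling μ ν γ) (z : U × V) : γ z ≤ μ z.1 := by
  rw [← h.sum_fst]
  exact single_le_sum (f := fun v => γ (z.1, v)) (fun v _ => h.nonneg _) (mem_univ z.2)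

theorem eq_zero_of_fst (h : IsCoupling μ ν γ) {u : U} (hu : μ u = 0) (v : V) : γ (u, v) = 0 := by
  rw [← h.sum_fst] at hu
  exact (sum_eq_zero_iff_of_nonneg fun v _ => h.nonneg _).1 hu v (mem_univ v)

theorem eq_zero_of_snd (h : IsCoupling μ ν γ) {v : V} (hv : ν v = 0) (u : U) : γ (u, v) = 0 := by
  rw [← h.sum_snd] at hv
  exact (sum_eq_zero_iff_of_nonneg fun u _ => h.nonneg _).1 hv u (mem_univ u)

end IsCoupling

theorem isCoupling_prod (hμ : ∀ u, 0 ≤ μ u) (hν : ∀ v, 0 ≤ ν v) (hμ1 : ∑ u, μ u = 1)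
    (hν1 : ∑ v, ν v = 1) : IsCoupling μ ν (fun z => μ z.1 * ν z.2) where
  nonneg z := mul_nonneg (hμ _) (hν _)
  sum_fst u := by dsimp only; rw [← mul_sum, hν1, mul_one]
  sum_snd v := by dsimp only; rw [← sum_mul, hμ1, one_mul]

theorem convex_setOf_isCoupling (μ : U → ℝ) (ν : V → ℝ) :
    Convex ℝ {γ : U × V → ℝ | IsCoupling μ ν γ} := by
  intro x hx y hy a b ha hb hab
  refine ⟨fun z => ?_, fun u => ?_, fun v => ?_⟩
  · simp only [Pi.add_apply, Pi.smul_apply, smul_eq_mul]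
    exact add_nonneg (mul_nonneg ha (hx.nonneg z)) (mul_nonneg hb (hy.nonneg z))
  · simp only [Pi.add_apply, Pi.smul_apply, smul_eq_mul, sum_add_distrib, ← mul_sum, hx.sum_fst,
      hy.sum_fst, ← add_mul, hab, one_mul]
  · simp only [Pi.add_apply, Pi.smul_apply, smul_eq_mul, sum_add_distrib, ← mul_sum, hx.sum_snd,
      hy.sum_snd, ← add_mul, hab, one_mul]

theorem isClosed_setOf_isCoupling (μ : U → ℝ) (ν : V → ℝ) :
    IsClosed {γ : U × V → ℝ | IsCoupling μ ν γ} := by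
  have h : {γ : U × V → ℝ | IsCoupling μ ν γ} = (⋂ z, {γ | 0 ≤ γ z}) ∩
      (⋂ u, {γ | ∑ v, γ (u, v) = μ u}) ∩ ⋂ v, {γ | ∑ u, γ (u, v) = ν v} := by
    ext γ
    simp only [Set.mem_ofPred_eq, Set.mem_inter_iff, Set.mem_iInter]
    exact ⟨fun h => ⟨⟨h.1, h.2⟩, h.3⟩, fun h => ⟨h.1.1, h.1.2, h.2⟩⟩
  rw [h]
  refine ((isClosed_iInter fun z => isClosed_le continuous_const (continuous_apply z)).inter
    (isClosed_iInter fun u => isClosed_eq (by fun_prop) continuous_const)).inter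
    (isClosed_iInter fun v => isClosed_eq (by fun_prop) continuous_const)

theorem IsCoupling.vecMul {P : Matrix U U ℝ} {Q : Matrix V V ℝ} {R : Matrix (U × V) (U × V) ℝ}
    (h : IsCoupling μ ν γ) (hR : ∀ z, IsCoupling (P z.1) (Q z.2) (R z))
    (hP : μ ᵥ* P = μ) (hQ : ν ᵥ* Q = ν) : IsCoupling μ ν (γ ᵥ* R) where
  nonneg z' := sum_nonneg fun z _ => mul_nonneg (h.nonneg z) ((hR z).nonneg z')
  sum_fst u' := by
    simp only [Matrix.vecMul, dotProduct] at hP ⊢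
    rw [sum_comm]
    simp only [← mul_sum, (hR _).sum_fst, Fintype.sum_prod_type, ← sum_mul, h.sum_fst]
    exact congrFun hP u'
  sum_snd v' := by
    simp only [Matrix.vecMul, dotProduct] at hQ ⊢
    rw [sum_comm]
    simp only [← mul_sum, (hR _).sum_snd, Fintype.sum_prod_type_right, ← sum_mul, h.sum_snd]
    exact congrFun hQ v'

variable {A B : Type*} [DecidableEq A] [DecidableEq B] (f : U → A) (g : V → B)

theorem fiberSum_prodMap (γ : U × V → ℝ) (a : A) (b : B) :
    fiberSum (Prod.map f g) γ (a, b) = ∑ u with f u = a, ∑ v with g v = b, γ (u, v) := by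
  rw [fiberSum, ← sum_product', ← filter_product, univ_product_univ]
  simp only [Prod.map, Prod.mk.injEq]

theorem IsCoupling.map [Fintype A] [Fintype B] (h : IsCoupling μ ν γ) :
    IsCoupling (fiberSum f μ) (fiberSum g ν) (fiberSum (Prod.map f g) γ) where
  nonneg := fiberSum_nonneg _ h.nonneg
  sum_fst a := by
    simp only [fiberSum_prodMap]
    rw [sum_comm]
    exact sum_congr rfl fun u _ => by rw [sum_fiberwise, h.sum_fst]
  sum_snd b := by
    simp only [fiberSum_prodMap]
    rw [sum_fiberwise (g := f) (f := fun u => ∑ v with g v = b, γ (u, v)), sum_comm]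
    exact sum_congr rfl fun v _ => h.sum_snd v

end Coupling

section Lift

variable {U V A B : Type*} [Fintype U] [Fintype V] [Fintype A] [Fintype B]
  [DecidableEq A] [DecidableEq B] (f : U → A) (g : V → B) {μ : U → ℝ} {ν : V → ℝ}
  {γ : A × B → ℝ}

/-- The relatively independent lift of `γ`: given the fibres `a = f u`, `b = g v`, the two
coordinates are drawn independently from `μ` and `ν` conditioned on their fibres. -/
noncomputable def liftMass (μ : U → ℝ) (ν : V → ℝ) (γ : A × B → ℝ) (z : U × V) : ℝ :=
  μ z.1 * ν z.2 * (γ (f z.1, g z.2) / (fiberSum f μ (f z.1) * fiberSum g ν (g z.2)))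

theorem isCoupling_liftMass (hμ : ∀ u, 0 ≤ μ u) (hν : ∀ v, 0 ≤ ν v)
    (h : IsCoupling (fiberSum f μ) (fiberSum g ν) γ) :
    IsCoupling μ ν (liftMass f g μ ν γ) where
  nonneg z := mul_nonneg (mul_nonneg (hμ _) (hν _)) (div_nonneg (h.nonneg _)
    (mul_nonneg (fiberSum_nonneg f hμ _) (fiberSum_nonneg g hν _)))
  sum_fst u := calc
    ∑ v, liftMass f g μ ν γ (u, v)
      = μ u * ∑ v, ν v * (γ (f u, g v) / fiberSum f μ (f u) / fiberSum g ν (g v)) := by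
        rw [mul_sum]
        exact sum_congr rfl fun v _ => by rw [liftMass, div_div]; ring
    _ = μ u * (fiberSum f μ (f u) / fiberSum f μ (f u)) := by
        rw [sum_mul_div_fiberSum g ν (T := fun b => γ (f u, b) / fiberSum f μ (f u))
          fun b hb => by rw [h.eq_zero_of_snd hb, zero_div], ← sum_div, h.sum_fst]
    _ = μ u := by rw [← mul_div_assoc, mul_div_cancel_of_imp (eq_zero_of_fiberSum_eq_zero f hμ)]
  sum_snd v := calc
    ∑ u, liftMass f g μ ν γ (u, v)
      = ν v * ∑ u, μ u * (γ (f u, g v) / fiberSum g ν (g v) / fiberSum f μ (f u)) := by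
        rw [mul_sum]
        exact sum_congr rfl fun u _ => by rw [liftMass, div_div]; ring
    _ = ν v * (fiberSum g ν (g v) / fiberSum g ν (g v)) := by
        rw [sum_mul_div_fiberSum f μ (T := fun a => γ (a, g v) / fiberSum g ν (g v))
          fun a ha => by rw [h.eq_zero_of_fst ha, zero_div], ← sum_div, h.sum_snd]
    _ = ν v := by rw [← mul_div_assoc, mul_div_cancel_of_imp (eq_zero_of_fiberSum_eq_zero g hν)]

theorem fiberSum_liftMass (h : IsCoupling (fiberSum f μ) (fiberSum g ν) γ) :
    fiberSum (Prod.map f g) (liftMass f g μ ν γ) = γ := by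
  ext ⟨a, b⟩
  have hfib : ∀ u ∈ ({u | f u = a} : Finset U), ∀ v ∈ ({v | g v = b} : Finset V),
      liftMass f g μ ν γ (u, v) = μ u * ν v * (γ (a, b) / (fiberSum f μ a * fiberSum g ν b)) := by
    intro u hu v hv
    rw [liftMass, (mem_filter.1 hu).2, (mem_filter.1 hv).2]
  rw [fiberSum_prodMap, sum_congr rfl fun u hu => sum_congr rfl (hfib u hu)]
  simp only [← sum_mul, ← mul_sum]
  refine mul_div_cancel_of_imp' fun h0 => ?_
  rcases mul_eq_zero.1 h0 with ha | hb
  · exact h.eq_zero_of_fst ha b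
  · exact h.eq_zero_of_snd hb a

end Lift

section Lump

variable {ι κ : Type*} [Fintype ι] [DecidableEq κ] (φ : ι → κ) {lam : ι → ℝ}
  {R : Matrix ι ι ℝ} {R₀ : Matrix κ κ ℝ}

/-- Rows of null fibres, never visited by the lumped chain, are filled in with `R₀`. -/
noncomputable def lumpKernel (lam : ι → ℝ) (R : Matrix ι ι ℝ) (R₀ : Matrix κ κ ℝ) :
    Matrix κ κ ℝ := fun k =>
  if fiberSum φ lam k = 0 then R₀ k
  else ({i | φ i = k} : Finset ι).centerMass lam fun i => fiberSum φ (R i)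

theorem fiberSum_mul_lumpKernel (hlam : ∀ i, 0 ≤ lam i) (k k' : κ) :
    fiberSum φ lam k * lumpKernel φ lam R R₀ k k' =
      ∑ i with φ i = k, lam i * fiberSum φ (R i) k' := by
  by_cases hk : fiberSum φ lam k = 0
  · have hzero : ∀ i ∈ ({i | φ i = k} : Finset ι), lam i = 0 := fun i hi =>
      eq_zero_of_fiberSum_eq_zero φ hlam (((mem_filter.1 hi).2).symm ▸ hk)
    rw [hk, zero_mul, sum_eq_zero fun i hi => by rw [hzero i hi, zero_mul]]
  · simp only [lumpKernel, if_neg hk, centerMass, Pi.smul_apply, Finset.sum_apply, smul_eq_mul]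
    exact mul_inv_cancel_left₀ hk _

theorem fiberSum_vecMul_lumpKernel [Fintype κ] (hlam : ∀ i, 0 ≤ lam i) (hR : lam ᵥ* R = lam) :
    fiberSum φ lam ᵥ* lumpKernel φ lam R R₀ = fiberSum φ lam := by
  ext k'
  calc ∑ k, fiberSum φ lam k * lumpKernel φ lam R R₀ k k'
      = ∑ i, lam i * fiberSum φ (R i) k' := by
        simp only [fiberSum_mul_lumpKernel φ hlam, sum_fiberwise]
    _ = fiberSum φ lam k' := by rw [← fiberSum_vecMul_apply, hR]

end Lump

theorem isCoupling_lumpKernel {ι A B : Type*} [Fintype ι] [Fintype A] [Fintype B] [DecidableEq A]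
    [DecidableEq B] (φ : ι → A × B) {lam : ι → ℝ} {R : Matrix ι ι ℝ}
    {R₀ : Matrix (A × B) (A × B) ℝ} {P : Matrix A A ℝ} {Q : Matrix B B ℝ} (hlam : ∀ i, 0 ≤ lam i)
    (hR : ∀ i, IsCoupling (P (φ i).1) (Q (φ i).2) (fiberSum φ (R i)))
    (hR₀ : ∀ k, IsCoupling (P k.1) (Q k.2) (R₀ k)) (k : A × B) :
    IsCoupling (P k.1) (Q k.2) (lumpKernel φ lam R R₀ k) := by
  unfold lumpKernel
  split_ifs with hk
  · exact hR₀ k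
  · refine (convex_setOf_isCoupling _ _).centerMass_mem (fun i _ => hlam i)
      ((fiberSum_nonneg φ hlam k).lt_of_ne (Ne.symm hk)) fun i hi => ?_
    rw [← (mem_filter.1 hi).2]
    exact hR i

/-- Krylov–Bogolyubov: the Cesàro averages of the orbit of `x₀` stay in `K`, and they are
almost fixed by `T` since `T` shifts the averaged orbit by one step. -/
theorem ContinuousLinearMap.exists_mem_fixed_of_mapsTo {E : Type*} [NormedAddCommGroup E]
    [NormedSpace ℝ E] (T : E →L[ℝ] E) {K : Set E} (hK : IsCompact K) (hKc : Convex ℝ K)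
    (hT : Set.MapsTo T K K) {x₀ : E} (hx₀ : x₀ ∈ K) : ∃ x ∈ K, T x = x := by
  set avg : ℕ → E := fun N => ∑ n ∈ range (N + 1), ((N : ℝ) + 1)⁻¹ • T^[n] x₀
  have havg : ∀ N, avg N ∈ K := fun N =>
    hKc.sum_mem (fun _ _ => by positivity) (by simp [field]) fun n _ => hT.iterate n hx₀
  have hshift : ∀ N, T (avg N) - avg N = ((N : ℝ) + 1)⁻¹ • (T^[N + 1] x₀ - x₀) := fun N => by
    simp only [avg, map_sum, map_smul, ← Function.iterate_succ_apply' T, ← sum_sub_distrib,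
      ← smul_sub, ← smul_sum, sum_range_sub (fun n => T^[n] x₀), Function.iterate_zero_apply]
  obtain ⟨C, hC⟩ := hK.isBounded.exists_norm_le
  have hsmall : Tendsto (fun N => T (avg N) - avg N) atTop (𝓝 0) := by
    refine squeeze_zero_norm (a := fun N : ℕ => 1 / ((N : ℝ) + 1) * (C + C)) (fun N => ?_)
      (by simpa using tendsto_one_div_add_atTop_nhds_zero_nat.mul_const (C + C))
    rw [hshift, norm_smul, norm_inv, one_div, Real.norm_of_nonneg (by positivity)]
    gcongr
    exact (norm_sub_le _ _).trans (add_le_add (hC _ (hT.iterate _ hx₀)) (hC _ hx₀))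
  obtain ⟨x, hxK, ψ, hψ, hlim⟩ := hK.tendsto_subseq havg
  have hTlim : Tendsto (fun N => T (avg (ψ N))) atTop (𝓝 x) := by
    simpa using (hsmall.comp hψ.tendsto_atTop).add hlim
  exact ⟨x, hxK, tendsto_nhds_unique ((T.continuous.tendsto x).comp hlim) hTlim⟩

theorem exists_stationary_isCoupling_of_fiberSum_eq {U V κ : Type*} [Fintype U] [Fintype V]
    [Fintype κ] [DecidableEq κ] (φ : U × V → κ) {P : Matrix U U ℝ} {Q : Matrix V V ℝ}
    {p : U → ℝ} {q : V → ℝ} {R : Matrix (U × V) (U × V) ℝ} {RK : Matrix κ κ ℝ}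
    {lamK : κ → ℝ} {lam₀ : U × V → ℝ} (hR : ∀ z, IsCoupling (P z.1) (Q z.2) (R z))
    (hRK : ∀ z, fiberSum φ (R z) = RK (φ z)) (hp : p ᵥ* P = p) (hq : q ᵥ* Q = q)
    (hlamK : lamK ᵥ* RK = lamK) (h₀ : IsCoupling p q lam₀) (h₀K : fiberSum φ lam₀ = lamK) :
    ∃ lam, IsCoupling p q lam ∧ fiberSum φ lam = lamK ∧ lam ᵥ* R = lam := by
  set K : Set (U × V → ℝ) := {γ | IsCoupling p q γ} ∩ {γ | fiberSum φ γ = lamK}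
  have hconv : Convex ℝ K := by
    refine (convex_setOf_isCoupling p q).inter fun x hx y hy a b _ _ hab => ?_
    ext k
    simp only [fiberSum, Pi.add_apply, Pi.smul_apply, smul_eq_mul, sum_add_distrib, ← mul_sum]
    rw [← fiberSum, ← fiberSum, Set.mem_ofPred.1 hx, Set.mem_ofPred.1 hy, ← add_mul, hab, one_mul]
  have hcompact : IsCompact K := by
    refine isCompact_Icc.of_isClosed_subset ((isClosed_setOf_isCoupling p q).inter
      (isClosed_eq ?_ continuous_const)) fun γ hγ => ⟨hγ.1.nonneg, hγ.1.le_fst⟩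
    exact continuous_pi fun k => continuous_finsetSum _ fun i _ => continuous_apply i
  have hmaps : Set.MapsTo (vecMulLinear R).toContinuousLinearMap K K := fun γ hγ =>
    ⟨hγ.1.vecMul hR hp hq, by
      simp only [LinearMap.coe_toContinuousLinearMap', vecMulLinear_apply, Set.mem_ofPred]
      rw [fiberSum_vecMul φ γ hRK, hγ.2, hlamK]⟩
  obtain ⟨lam, ⟨hlam, hlamK⟩, hfix⟩ :=
    (vecMulLinear R).toContinuousLinearMap.exists_mem_fixed_of_mapsTo hcompact hconv hmaps
      (x₀ := lam₀) ⟨h₀, h₀K⟩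
  exact ⟨lam, hlam, hlamK, hfix⟩

theorem sum_paths_lying_over_eq {ι κ : Type*} [Fintype ι] [DecidableEq κ] (φ : ι → κ)
    {R : Matrix ι ι ℝ} {RK : Matrix κ κ ℝ} (hR : ∀ i, fiberSum φ (R i) = RK (φ i)) (n : ℕ)
    (ν : ι → ℝ) (k : Fin (n + 1) → κ) :
    ∑ x : Fin (n + 1) → ι with ∀ j, φ (x j) = k j,
        ν (x 0) * ∏ j : Fin n, R (x j.castSucc) (x j.succ) =
      fiberSum φ ν (k 0) * ∏ j : Fin n, RK (k j.castSucc) (k j.succ) := by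
  have hcons : ∀ {m} (k : Fin (m + 1) → κ),
      ({x | ∀ j, φ (x j) = k j} : Finset (Fin (m + 1) → ι)) =
      (({i | φ i = k 0} : Finset ι) ×ˢ ({x | ∀ j, φ (x j) = k j.succ} : Finset (Fin m → ι))).map
        (Fin.consEquiv fun _ => ι).toEmbedding := by
    intro m k
    ext x
    simp [Fin.forall_fin_succ, Fin.consEquiv, Fin.tail]
  induction n generalizing ν with
  | zero =>
    rw [hcons, sum_map, sum_product]
    simp [fiberSum]
  | succ n ih =>
    rw [hcons, sum_map, sum_product]
    simp only [Equiv.toEmbedding_apply, Fin.consEquiv_apply, Fin.cons_zero, Fin.prod_univ_succ,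
      Fin.castSucc_zero, Fin.cons_succ, ← Fin.succ_castSucc, ← mul_sum]
    rw [fiberSum, sum_mul]
    refine sum_congr rfl fun a ha => ?_
    rw [ih, hR, (mem_filter.1 ha).2]

section TransitionCoupling

variable {U V : Type*} [Fintype U] [Fintype V] {P : Matrix U U ℝ} {Q : Matrix V V ℝ}
  {p : U → ℝ} {q : V → ℝ}

theorem isTCStat_iff {lam : U × V → ℝ} {R : Matrix (U × V) (U × V) ℝ} :
    IsTCStat P Q p q lam R ↔ (∀ z, IsCoupling (P z.1) (Q z.2) (R z)) ∧ IsCoupling p q lam ∧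
      ∑ z, lam z = 1 ∧ lam ᵥ* R = lam := by
  constructor
  · rintro ⟨hR, hRP, hRQ, hnn, hsum, hstat, hp, hq⟩
    exact ⟨fun z => ⟨hR z, hRP z, hRQ z⟩, ⟨hnn, hp, hq⟩, hsum, funext hstat⟩
  · rintro ⟨hR, ⟨hnn, hp, hq⟩, hsum, hstat⟩
    exact ⟨fun z => (hR z).nonneg, fun z => (hR z).sum_fst, fun z => (hR z).sum_snd, hnn, hsum,
      congrFun hstat, hp, hq⟩

variable {A B : Type*} [Fintype A] [Fintype B] [DecidableEq A] [DecidableEq B]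
  {PH : Matrix A A ℝ} {QH : Matrix B B ℝ} {f : U → A} {g : V → B} {pH : A → ℝ} {qH : B → ℝ}

theorem IsTCStat.map {lam : U × V → ℝ} {R : Matrix (U × V) (U × V) ℝ}
    (hPH : ∀ a a', 0 ≤ PH a a') (hPHrow : ∀ a, ∑ a', PH a a' = 1)
    (hQH : ∀ b b', 0 ≤ QH b b') (hQHrow : ∀ b, ∑ b', QH b b' = 1)
    (hf : ∀ u, fiberSum f (P u) = PH (f u)) (hg : ∀ v, fiberSum g (Q v) = QH (g v))
    (hp : fiberSum f p = pH) (hq : fiberSum g q = qH) (h : IsTCStat P Q p q lam R) :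
    IsTCStat PH QH pH qH (fiberSum (Prod.map f g) lam)
      (lumpKernel (Prod.map f g) lam R fun ab ab' => PH ab.1 ab'.1 * QH ab.2 ab'.2) := by
  obtain ⟨hR, hlam, hsum, hstat⟩ := isTCStat_iff.1 h
  refine isTCStat_iff.2 ⟨isCoupling_lumpKernel _ hlam.nonneg (fun z => ?_) (fun ab => ?_), ?_,
    by rw [sum_fiberSum, hsum], fiberSum_vecMul_lumpKernel _ hlam.nonneg hstat⟩
  · simpa only [hf, hg, Prod.map_fst, Prod.map_snd] using (hR z).map f g
  · exact isCoupling_prod (hPH ab.1) (hQH ab.2) (hPHrow ab.1) (hQHrow ab.2)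
  · simpa only [hp, hq] using hlam.map f g

theorem IsTCStat.exists_lift {lamH : A × B → ℝ} {RH : Matrix (A × B) (A × B) ℝ}
    (hP : ∀ u u', 0 ≤ P u u') (hQ : ∀ v v', 0 ≤ Q v v') (hp₀ : ∀ u, 0 ≤ p u)
    (hq₀ : ∀ v, 0 ≤ q v) (hpstat : p ᵥ* P = p) (hqstat : q ᵥ* Q = q)
    (hf : ∀ u, fiberSum f (P u) = PH (f u)) (hg : ∀ v, fiberSum g (Q v) = QH (g v))
    (hp : fiberSum f p = pH) (hq : fiberSum g q = qH) (h : IsTCStat PH QH pH qH lamH RH) :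
    ∃ (lam : U × V → ℝ) (R : Matrix (U × V) (U × V) ℝ), IsTCStat P Q p q lam R ∧
      fiberSum (Prod.map f g) lam = lamH ∧
      ∀ z, fiberSum (Prod.map f g) (R z) = RH (Prod.map f g z) := by
  obtain ⟨hRH, hlamH, hsum, hstat⟩ := isTCStat_iff.1 h
  have hRH' (z : U × V) :
      IsCoupling (fiberSum f (P z.1)) (fiberSum g (Q z.2)) (RH (f z.1, g z.2)) := by
    rw [hf, hg]
    exact hRH (f z.1, g z.2)
  have hlamH' : IsCoupling (fiberSum f p) (fiberSum g q) lamH := by rwa [hp, hq]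
  set R : Matrix (U × V) (U × V) ℝ := fun z => liftMass f g (P z.1) (Q z.2) (RH (f z.1, g z.2))
  have hR (z : U × V) : IsCoupling (P z.1) (Q z.2) (R z) :=
    isCoupling_liftMass f g (hP z.1) (hQ z.2) (hRH' z)
  have hRK (z : U × V) : fiberSum (Prod.map f g) (R z) = RH (Prod.map f g z) :=
    fiberSum_liftMass f g (hRH' z)
  obtain ⟨lam, hlam, hpush, hfix⟩ := exists_stationary_isCoupling_of_fiberSum_eq (Prod.map f g)
    hR hRK hpstat hqstat hstat (isCoupling_liftMass f g hp₀ hq₀ hlamH')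
    (fiberSum_liftMass f g hlamH')
  refine ⟨lam, R, isTCStat_iff.2 ⟨hR, hlam, ?_, hfix⟩, hpush, hRK⟩
  rw [← sum_fiberSum (Prod.map f g), hpush, hsum]

end TransitionCoupling

theorem factor_optimal_costs_agree_and_lift_general
    {U V A B : Type*} [Fintype U] [Fintype V] [Fintype A] [Fintype B]
    [DecidableEq A] [DecidableEq B]
    (P : U → U → ℝ) (Q : V → V → ℝ) (PH : A → A → ℝ) (QH : B → B → ℝ)
    (f : U → A) (g : V → B)
    (p : U → ℝ) (q : V → ℝ) (pH : A → ℝ) (qH : B → ℝ)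
    (c : A → B → ℝ)
    (hPnn : ∀ u u', 0 ≤ P u u')
    (hQnn : ∀ v v', 0 ≤ Q v v')
    (hPHnn : ∀ a a', 0 ≤ PH a a') (hPHrow : ∀ a, ∑ a', PH a a' = 1)
    (hQHnn : ∀ b b', 0 ≤ QH b b') (hQHrow : ∀ b, ∑ b', QH b b' = 1)
    (hffac : ∀ (u : U) (a' : A),
      ∑ u' ∈ Finset.univ.filter (fun u' => f u' = a'), P u u' = PH (f u) a')
    (hgfac : ∀ (v : V) (b' : B),
      ∑ v' ∈ Finset.univ.filter (fun v' => g v' = b'), Q v v' = QH (g v) b')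
    (hpnn : ∀ u, 0 ≤ p u)
    (hpstat : ∀ u', ∑ u, p u * P u u' = p u')
    (hqnn : ∀ v, 0 ≤ q v)
    (hqstat : ∀ v', ∑ v, q v * Q v v' = q v')
    (hpushf : ∀ a, ∑ u ∈ Finset.univ.filter (fun u => f u = a), p u = pH a)
    (hpushg : ∀ b, ∑ v ∈ Finset.univ.filter (fun v => g v = b), q v = qH b) :
    (sInf {x : ℝ | ∃ (lam : U × V → ℝ) (R : U × V → U × V → ℝ),
        IsTCStat P Q p q lam R ∧ x = ∑ z : U × V, lam z * c (f z.1) (g z.2)}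
      = sInf {x : ℝ | ∃ (lamH : A × B → ℝ) (RH : A × B → A × B → ℝ),
        IsTCStat PH QH pH qH lamH RH ∧ x = ∑ ab : A × B, lamH ab * c ab.1 ab.2})
    ∧ ∀ (lamH : A × B → ℝ) (RH : A × B → A × B → ℝ),
        IsTCStat PH QH pH qH lamH RH →
        (∑ ab : A × B, lamH ab * c ab.1 ab.2
          = sInf {x : ℝ | ∃ (lamH' : A × B → ℝ) (RH' : A × B → A × B → ℝ),
              IsTCStat PH QH pH qH lamH' RH' ∧
              x = ∑ ab : A × B, lamH' ab * c ab.1 ab.2}) →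
        ∃ (lam : U × V → ℝ) (R : U × V → U × V → ℝ),
          IsTCStat P Q p q lam R ∧
          (∑ z : U × V, lam z * c (f z.1) (g z.2)
            = sInf {x : ℝ | ∃ (lam' : U × V → ℝ) (R' : U × V → U × V → ℝ),
                IsTCStat P Q p q lam' R' ∧
                x = ∑ z : U × V, lam' z * c (f z.1) (g z.2)}) ∧
          ∀ (n : ℕ) (ab : Fin (n + 1) → A × B),
            ∑ z ∈ Finset.univ.filter
                (fun z : Fin (n + 1) → U × V =>
                  ∀ i, f (z i).1 = (ab i).1 ∧ g (z i).2 = (ab i).2),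
              lam (z 0) * ∏ i : Fin n, R (z i.castSucc) (z i.succ)
            = lamH (ab 0) * ∏ i : Fin n, RH (ab i.castSucc) (ab i.succ) := by
  have hf (u : U) : fiberSum f (P u) = PH (f u) := funext (hffac u)
  have hg (v : V) : fiberSum g (Q v) = QH (g v) := funext (hgfac v)
  have hp : fiberSum f p = pH := funext hpushf
  have hq : fiberSum g q = qH := funext hpushg
  have hcost (lam : U × V → ℝ) : ∑ z : U × V, lam z * c (f z.1) (g z.2) =
      ∑ ab : A × B, fiberSum (Prod.map f g) lam ab * c ab.1 ab.2 :=
    (sum_fiberSum_mul (Prod.map f g) lam fun ab => c ab.1 ab.2).symm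
  have hlift (lamH : A × B → ℝ) (RH : A × B → A × B → ℝ) (h : IsTCStat PH QH pH qH lamH RH) :=
    h.exists_lift hPnn hQnn hpnn hqnn (funext hpstat) (funext hqstat) hf hg hp hq
  have hcosts : {x : ℝ | ∃ (lam : U × V → ℝ) (R : U × V → U × V → ℝ),
        IsTCStat P Q p q lam R ∧ x = ∑ z : U × V, lam z * c (f z.1) (g z.2)}
      = {x : ℝ | ∃ (lamH : A × B → ℝ) (RH : A × B → A × B → ℝ),
        IsTCStat PH QH pH qH lamH RH ∧ x = ∑ ab : A × B, lamH ab * c ab.1 ab.2} := by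
    ext x
    constructor
    · rintro ⟨lam, R, h, rfl⟩
      exact ⟨_, _, h.map hPHnn hPHrow hQHnn hQHrow hf hg hp hq, hcost lam⟩
    · rintro ⟨lamH, RH, h, rfl⟩
      obtain ⟨lam, R, h, hpush, -⟩ := hlift lamH RH h
      exact ⟨lam, R, h, by rw [hcost, hpush]⟩
  refine ⟨congrArg sInf hcosts, fun lamH RH h hopt => ?_⟩
  obtain ⟨lam, R, hTC, hpush, hR⟩ := hlift lamH RH h
  refine ⟨lam, R, hTC, by rw [hcost, hpush, hopt, hcosts], fun n ab => ?_⟩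
  simpa only [Prod.ext_iff, Prod.map_fst, Prod.map_snd, hpush] using
    sum_paths_lying_over_eq (Prod.map f g) hR n lam ab

/-- Let `f : U → A` and `g : V → B` be factor maps from `G₁` to `H₁` and
from `G₂` to `H₂`, with costs satisfying `c_ext(u,v) = c(f(u), g(v))`.  Then the optimal
transition coupling costs agree, and every optimal transition coupling `(W̃,Z̃)` of `W`
and `Z` lifts to an optimal transition coupling `(X̃,Ỹ)` of `X` and `Y` with
`(f(X̃), g(Ỹ))` equal in distribution to `(W̃,Z̃)` (equality of all finite-dimensional
distributions of the pushed process with those of the Markov chain `(lamH, RH)`). -/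
theorem factor_optimal_costs_agree_and_lift
    {U V A B : Type*} [Fintype U] [Fintype V] [Fintype A] [Fintype B]
    [DecidableEq U] [DecidableEq V] [DecidableEq A] [DecidableEq B]
    (P : U → U → ℝ) (Q : V → V → ℝ) (PH : A → A → ℝ) (QH : B → B → ℝ)
    (f : U → A) (g : V → B)
    (p : U → ℝ) (q : V → ℝ) (pH : A → ℝ) (qH : B → ℝ)
    (c : A → B → ℝ)
    (hPnn : ∀ u u', 0 ≤ P u u') (hProw : ∀ u, ∑ u', P u u' = 1)
    (hQnn : ∀ v v', 0 ≤ Q v v') (hQrow : ∀ v, ∑ v', Q v v' = 1)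
    (hPHnn : ∀ a a', 0 ≤ PH a a') (hPHrow : ∀ a, ∑ a', PH a a' = 1)
    (hQHnn : ∀ b b', 0 ≤ QH b b') (hQHrow : ∀ b, ∑ b', QH b b' = 1)
    (hffac : ∀ (u : U) (a' : A),
      ∑ u' ∈ Finset.univ.filter (fun u' => f u' = a'), P u u' = PH (f u) a')
    (hgfac : ∀ (v : V) (b' : B),
      ∑ v' ∈ Finset.univ.filter (fun v' => g v' = b'), Q v v' = QH (g v) b')
    (hpnn : ∀ u, 0 ≤ p u) (hpsum : ∑ u, p u = 1)
    (hpstat : ∀ u', ∑ u, p u * P u u' = p u')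
    (hqnn : ∀ v, 0 ≤ q v) (hqsum : ∑ v, q v = 1)
    (hqstat : ∀ v', ∑ v, q v * Q v v' = q v')
    (hpushf : ∀ a, ∑ u ∈ Finset.univ.filter (fun u => f u = a), p u = pH a)
    (hpushg : ∀ b, ∑ v ∈ Finset.univ.filter (fun v => g v = b), q v = qH b) :
    (sInf {x : ℝ | ∃ (lam : U × V → ℝ) (R : U × V → U × V → ℝ),
        IsTCStat P Q p q lam R ∧ x = ∑ z : U × V, lam z * c (f z.1) (g z.2)}
      = sInf {x : ℝ | ∃ (lamH : A × B → ℝ) (RH : A × B → A × B → ℝ),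
        IsTCStat PH QH pH qH lamH RH ∧ x = ∑ ab : A × B, lamH ab * c ab.1 ab.2})
    ∧ ∀ (lamH : A × B → ℝ) (RH : A × B → A × B → ℝ),
        IsTCStat PH QH pH qH lamH RH →
        (∑ ab : A × B, lamH ab * c ab.1 ab.2
          = sInf {x : ℝ | ∃ (lamH' : A × B → ℝ) (RH' : A × B → A × B → ℝ),
              IsTCStat PH QH pH qH lamH' RH' ∧
              x = ∑ ab : A × B, lamH' ab * c ab.1 ab.2}) →
        ∃ (lam : U × V → ℝ) (R : U × V → U × V → ℝ),
          IsTCStat P Q p q lam R ∧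
          (∑ z : U × V, lam z * c (f z.1) (g z.2)
            = sInf {x : ℝ | ∃ (lam' : U × V → ℝ) (R' : U × V → U × V → ℝ),
                IsTCStat P Q p q lam' R' ∧
                x = ∑ z : U × V, lam' z * c (f z.1) (g z.2)}) ∧
          ∀ (n : ℕ) (ab : Fin (n + 1) → A × B),
            ∑ z ∈ Finset.univ.filter
                (fun z : Fin (n + 1) → U × V =>
                  ∀ i, f (z i).1 = (ab i).1 ∧ g (z i).2 = (ab i).2),
              lam (z 0) * ∏ i : Fin n, R (z i.castSucc) (z i.succ)
            = lamH (ab 0) * ∏ i : Fin n, RH (ab i.castSucc) (ab i.succ) :=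
  factor_optimal_costs_agree_and_lift_general P Q PH QH f g p q pH qH c hPnn hQnn hPHnn hPHrow hQHnn
    hQHrow hffac hgfac hpnn hpstat hqnn hqstat hpushf hpushg
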